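/- arXiv:1505.04953 — 2 statements merged into one kernel-verified Lean document; each statement's English description precedes it below -/
import Mathlib

section
/- Let u1, u2 : [0,L] → ℝ be C² functions, ν > 0, λ > 0, and H : [0,L] × ℝ × ℝ → ℝ continuous and nondecreasing in its second (r) argument. Suppose -ν u1'' + H(x, u1, u1') + λ u1 ≥ -ν u2'' + H(x, u2, u2') + λ u2 on [0,L], and u1'(0) ≤ u2'(0), u1'(L) ≥ u2'(L) (i.e., the outward oriented derivatives at the endpoints satisfy the Kirchhoff-type inequality). Then u1 ≥ u2 on [0,L]. (Interval case of the comparison principle on a network.) -/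
/-!
Suppose `w = u2 - u1` is positive somewhere and let `x₀` be a maximum point of `w` on `[0, L]`.
At an interior point `w'(x₀) = 0`; at an endpoint the maximum gives one sign of `w'(x₀)` and the
Kirchhoff inequality the other, so again `w'(x₀) = 0`. Then `u1'(x₀) = u2'(x₀)`, and the
monotonicity of `H` in `r` turns the differential inequality into `ν w''(x₀) ≥ λ w(x₀) > 0`.
But a point with `w' = 0` and `w'' > 0` is a strict local minimum, so `w` exceeds `w(x₀)` at
points of `[0, L]` on either side of `x₀`, which is impossible.
-/

open Set Filter Topology

section

variable {f : ℝ → ℝ} {a b x₀ : ℝ}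

theorem IsMaxOn.deriv_nonpos_of_lt_right (h : IsMaxOn f (Icc a b) x₀) (hx₀ : x₀ ∈ Icc a b)
    (hf : DifferentiableAt ℝ f x₀) (hlt : x₀ < b) : deriv f x₀ ≤ 0 := by
  have hcone := sub_mem_posTangentConeAt_of_segment_subset
    ((convex_Icc a b).segment_subset hx₀ (right_mem_Icc.2 (hx₀.1.trans hlt.le)))
  have := h.localize.hasFDerivWithinAt_nonpos hf.hasDerivAt.hasFDerivAt.hasFDerivWithinAt hcone
  rw [ContinuousLinearMap.toSpanSingleton_apply, smul_eq_mul] at this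
  exact nonpos_of_mul_nonpos_right this (sub_pos.2 hlt)

theorem IsMaxOn.deriv_nonneg_of_left_lt (h : IsMaxOn f (Icc a b) x₀) (hx₀ : x₀ ∈ Icc a b)
    (hf : DifferentiableAt ℝ f x₀) (hlt : a < x₀) : 0 ≤ deriv f x₀ := by
  have hcone := sub_mem_posTangentConeAt_of_segment_subset
    ((convex_Icc a b).segment_subset hx₀ (left_mem_Icc.2 (hlt.le.trans hx₀.2)))
  have := h.localize.hasFDerivWithinAt_nonpos hf.hasDerivAt.hasFDerivAt.hasFDerivWithinAt hcone
  rw [ContinuousLinearMap.toSpanSingleton_apply, smul_eq_mul] at this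
  exact nonneg_of_mul_nonpos_right this (sub_neg.2 hlt)

theorem eventually_nhdsGT_lt_of_deriv_pos (hf : Differentiable ℝ f)
    (h : ∀ᶠ x in 𝓝[>] x₀, 0 < deriv f x) : ∀ᶠ x in 𝓝[>] x₀, f x₀ < f x := by
  obtain ⟨c, hc, hsub⟩ := mem_nhdsGT_iff_exists_Ioo_subset.1 h
  have hmono : StrictMonoOn f (Ico x₀ c) :=
    strictMonoOn_of_deriv_pos (convex_Ico x₀ c) hf.continuous.continuousOn
      fun x hx ↦ hsub (by rwa [interior_Ico] at hx)
  filter_upwards [Ioo_mem_nhdsGT hc] with x hx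
  exact hmono (left_mem_Ico.2 hc) (Ioo_subset_Ico_self hx) hx.1

theorem eventually_nhdsLT_lt_of_deriv_neg (hf : Differentiable ℝ f)
    (h : ∀ᶠ x in 𝓝[<] x₀, deriv f x < 0) : ∀ᶠ x in 𝓝[<] x₀, f x₀ < f x := by
  obtain ⟨c, hc, hsub⟩ := mem_nhdsLT_iff_exists_Ioo_subset.1 h
  have hanti : StrictAntiOn f (Ioc c x₀) :=
    strictAntiOn_of_deriv_neg (convex_Ioc c x₀) hf.continuous.continuousOn
      fun x hx ↦ hsub (by rwa [interior_Ioc] at hx)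
  filter_upwards [Ioo_mem_nhdsLT hc] with x hx
  exact hanti (Ioo_subset_Ioc_self hx) (right_mem_Ioc.2 hc) hx.2

theorem eventually_nhdsNE_lt_of_deriv_deriv_pos (hf : Differentiable ℝ f)
    (hd : deriv f x₀ = 0) (hdd : 0 < deriv (deriv f) x₀) : ∀ᶠ x in 𝓝[≠] x₀, f x₀ < f x := by
  have hsign : ∀ᶠ x in 𝓝[≠] x₀, SignType.sign (deriv f x) = SignType.sign (x - x₀) :=
    nhdsWithin_le_nhds (eventually_nhdsWithin_sign_eq_of_deriv_pos hdd hd)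
  rw [← nhdsLT_sup_nhdsGT, eventually_sup]
  exact ⟨eventually_nhdsLT_lt_of_deriv_neg hf (deriv_neg_left_of_sign_deriv hsign),
    eventually_nhdsGT_lt_of_deriv_pos hf (deriv_pos_right_of_sign_deriv hsign)⟩

theorem IsMaxOn.deriv_deriv_nonpos (h : IsMaxOn f (Icc a b) x₀) (hx₀ : x₀ ∈ Icc a b)
    (hab : a < b) (hf : Differentiable ℝ f) (hd : deriv f x₀ = 0) :
    deriv (deriv f) x₀ ≤ 0 := by
  by_contra! hdd
  have hmin := eventually_nhdsNE_lt_of_deriv_deriv_pos hf hd hdd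
  obtain ⟨x, hlt, hx⟩ : ∃ x, f x₀ < f x ∧ x ∈ Icc a b := by
    rcases hx₀.2.lt_or_eq with hr | rfl
    · obtain ⟨x, hlt, hx⟩ :=
        ((hmin.filter_mono (nhdsGT_le_nhdsNE x₀)).and (Ioo_mem_nhdsGT hr)).exists
      exact ⟨x, hlt, hx₀.1.trans hx.1.le, hx.2.le⟩
    · obtain ⟨x, hlt, hx⟩ :=
        ((hmin.filter_mono (nhdsLT_le_nhdsNE x₀)).and (Ioo_mem_nhdsLT hab)).exists
      exact ⟨x, hlt, hx.1.le, hx.2.le⟩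
  exact (h hx).not_gt hlt

end

theorem stmt_0_general (L ν lam : ℝ) (hL : 0 < L) (hν : 0 < ν) (hlam : 0 < lam)
    (H : ℝ → ℝ → ℝ → ℝ)
    (hHmono : ∀ x p : ℝ, Monotone fun r => H x r p)
    (u1 u2 : ℝ → ℝ) (hu1 : ContDiff ℝ 2 u1) (hu2 : ContDiff ℝ 2 u2)
    (hineq : ∀ x ∈ Icc (0:ℝ) L,
      -ν * deriv (deriv u1) x + H x (u1 x) (deriv u1 x) + lam * u1 x ≥
      -ν * deriv (deriv u2) x + H x (u2 x) (deriv u2 x) + lam * u2 x)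
    (h0 : deriv u1 0 ≤ deriv u2 0)
    (hLend : deriv u2 L ≤ deriv u1 L) :
    ∀ x ∈ Icc (0:ℝ) L, u2 x ≤ u1 x := by
  intro x hx
  by_contra! hlt
  have hw : ContDiff ℝ 2 (u2 - u1) := hu2.sub hu1
  have hdw (y : ℝ) : deriv (u2 - u1) y = deriv u2 y - deriv u1 y :=
    deriv_sub (hu2.differentiable two_ne_zero y) (hu1.differentiable two_ne_zero y)
  have hddw (y : ℝ) : deriv (deriv (u2 - u1)) y = deriv (deriv u2) y - deriv (deriv u1) y := by
    rw [show deriv (u2 - u1) = deriv u2 - deriv u1 from funext hdw]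
    exact deriv_sub (hu2.differentiable_deriv_two y) (hu1.differentiable_deriv_two y)
  obtain ⟨x₀, hx₀, hmax⟩ :=
    isCompact_Icc.exists_isMaxOn ⟨x, hx⟩ hw.continuous.continuousOn
  have hdiff : Differentiable ℝ (u2 - u1) := hw.differentiable two_ne_zero
  have hd : deriv (u2 - u1) x₀ = 0 := by
    apply le_antisymm
    · rcases hx₀.2.lt_or_eq with hr | rfl
      · exact hmax.deriv_nonpos_of_lt_right hx₀ (hdiff x₀) hr
      · linarith [hdw x₀]
    · rcases hx₀.1.lt_or_eq with hl | rfl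
      · exact hmax.deriv_nonneg_of_left_lt hx₀ (hdiff x₀) hl
      · linarith [hdw 0]
  have hdd := hmax.deriv_deriv_nonpos hx₀ hL hdiff hd
  have hpos : 0 < u2 x₀ - u1 x₀ := (sub_pos.2 hlt).trans_le (hmax hx)
  have hH : H x₀ (u1 x₀) (deriv u1 x₀) ≤ H x₀ (u2 x₀) (deriv u1 x₀) :=
    hHmono x₀ (deriv u1 x₀) (sub_pos.1 hpos).le
  have hineq₀ := hineq x₀ hx₀
  rw [show deriv u2 x₀ = deriv u1 x₀ by linarith [hdw x₀]] at hineq₀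
  rw [hddw] at hdd
  have hdiffusion := mul_nonpos_of_nonneg_of_nonpos hν.le hdd
  have hreaction := mul_pos hlam hpos
  linarith

/-- Comparison principle on an interval (one-edge network): if `u1` is a supersolution
relative to `u2` for `-ν u'' + H(x,u,u') + λ u` and the oriented (Kirchhoff-type)
derivative inequalities hold at both endpoints, then `u1 ≥ u2` on `[0,L]`. -/
theorem stmt_0 (L ν lam : ℝ) (hL : 0 < L) (hν : 0 < ν) (hlam : 0 < lam)
    (H : ℝ → ℝ → ℝ → ℝ)
    (hHcont : Continuous fun p : ℝ × ℝ × ℝ => H p.1 p.2.1 p.2.2)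
    (hHmono : ∀ x p : ℝ, Monotone fun r => H x r p)
    (u1 u2 : ℝ → ℝ) (hu1 : ContDiff ℝ 2 u1) (hu2 : ContDiff ℝ 2 u2)
    (hineq : ∀ x ∈ Icc (0:ℝ) L,
      -ν * deriv (deriv u1) x + H x (u1 x) (deriv u1 x) + lam * u1 x ≥
      -ν * deriv (deriv u2) x + H x (u2 x) (deriv u2 x) + lam * u2 x)
    (h0 : deriv u1 0 ≤ deriv u2 0)
    (hLend : deriv u2 L ≤ deriv u1 L) :
    ∀ x ∈ Icc (0:ℝ) L, u2 x ≤ u1 x :=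
  stmt_0_general L ν lam hL hν hlam H hHmono u1 u2 hu1 hu2 hineq h0 hLend
end

section
/- Uniqueness for the stationary MFG system on an interval under monotone coupling: in the setting of the cross-duality identity, assume additionally H(x,·) strictly convex for each x, m1, m2 > 0 on [0,L], and V strictly increasing (so that ∫ (V(m1)-V(m2))(m1-m2) dx ≤ 0 implies m1 = m2). Then m1 = m2, u1 = u2, and ρ1 = ρ2. -/
open Set intervalIntegral

/-!
Subtract the two HJB equations and test against `m₁ - m₂`; subtract the two Fokker–Planck
fluxes, which vanish identically by the no-flux condition at `0`, and test against `u₁' - u₂'`.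
Pointwise this gives the cross-duality identity
`(V m₁ - V m₂)(m₁ - m₂) + m₁ D(u₁', u₂') + m₂ D(u₂', u₁')`
`  = (-ν (u₁' - u₂')(m₁ - m₂))' + (ρ₁ - ρ₂)(m₁ - m₂)`,
where `D` is the Bregman divergence of `H x`. The right side integrates to zero by the Neumann
condition and `∫ m₁ = ∫ m₂`, while the left side is continuous and nonnegative, hence vanishes.
Strict monotonicity of `V` and strict convexity of `H x` then force `m₁ = m₂` and `u₁' = u₂'`;
the normalisation `∫ u = 0` gives `u₁ = u₂`, and the HJB equation at an interior point gives
`ρ₁ = ρ₂`.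
-/

noncomputable def bregmanDiv (f : ℝ → ℝ) (p q : ℝ) : ℝ := f q - f p - deriv f p * (q - p)

lemma ConvexOn.bregmanDiv_nonneg {f : ℝ → ℝ} (hf : ConvexOn ℝ univ f)
    {p : ℝ} (hd : DifferentiableAt ℝ f p) (q : ℝ) : 0 ≤ bregmanDiv f p q := by
  unfold bregmanDiv
  rcases lt_trichotomy p q with hpq | rfl | hqp
  · have h := hf.deriv_le_slope (mem_univ p) (mem_univ q) hpq hd
    rw [slope_def_field, le_div_iff₀ (sub_pos.2 hpq)] at h
    linarith
  · simp
  · have h := hf.slope_le_deriv (mem_univ q) (mem_univ p) hqp hd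
    rw [slope_def_field, div_le_iff₀ (sub_pos.2 hqp)] at h
    linarith

lemma StrictConvexOn.bregmanDiv_pos {f : ℝ → ℝ} (hf : StrictConvexOn ℝ univ f)
    {p q : ℝ} (hd : DifferentiableAt ℝ f p) (hpq : p ≠ q) : 0 < bregmanDiv f p q := by
  unfold bregmanDiv
  rcases hpq.lt_or_gt with hpq | hqp
  · have h := hf.deriv_lt_slope (mem_univ p) (mem_univ q) hpq hd
    rw [slope_def_field, lt_div_iff₀ (sub_pos.2 hpq)] at h
    linarith
  · have h := hf.slope_lt_deriv (mem_univ q) (mem_univ p) hqp hd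
    rw [slope_def_field, div_lt_iff₀ (sub_pos.2 hqp)] at h
    linarith

section OrderedRing

variable {R : Type*} [Ring R] [LinearOrder R] [IsStrictOrderedRing R] {V : R → R}

lemma Monotone.sub_mul_sub_nonneg (hV : Monotone V) (a b : R) : 0 ≤ (V a - V b) * (a - b) := by
  rcases le_total a b with h | h
  · exact mul_nonneg_of_nonpos_of_nonpos (sub_nonpos.2 (hV h)) (sub_nonpos.2 h)
  · exact mul_nonneg (sub_nonneg.2 (hV h)) (sub_nonneg.2 h)

lemma StrictMono.sub_mul_sub_pos (hV : StrictMono V) {a b : R} (hab : a ≠ b) :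
    0 < (V a - V b) * (a - b) := by
  rcases hab.lt_or_gt with h | h
  · exact mul_pos_of_neg_of_neg (sub_neg.2 (hV h)) (sub_neg.2 h)
  · exact mul_pos (sub_pos.2 (hV h)) (sub_pos.2 h)

end OrderedRing

noncomputable def crossDefect (V f : ℝ → ℝ) (a b p q : ℝ) : ℝ :=
  (V a - V b) * (a - b) + a * bregmanDiv f p q + b * bregmanDiv f q p

section CrossDefect

variable {V f : ℝ → ℝ} {a b p q : ℝ}

lemma crossDefect_nonneg (hV : Monotone V) (hf : ConvexOn ℝ univ f) (hd : Differentiable ℝ f)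
    (ha : 0 ≤ a) (hb : 0 ≤ b) : 0 ≤ crossDefect V f a b p q :=
  add_nonneg (add_nonneg (hV.sub_mul_sub_nonneg a b)
    (mul_nonneg ha (hf.bregmanDiv_nonneg (hd p) q))) (mul_nonneg hb (hf.bregmanDiv_nonneg (hd q) p))

lemma eq_and_eq_of_crossDefect_eq_zero (hV : StrictMono V) (hf : StrictConvexOn ℝ univ f)
    (hd : Differentiable ℝ f) (ha : 0 < a) (hb : 0 < b) (h : crossDefect V f a b p q = 0) :
    a = b ∧ p = q := by
  have hVab := hV.monotone.sub_mul_sub_nonneg a b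
  have hpq := mul_nonneg ha.le (hf.convexOn.bregmanDiv_nonneg (hd p) q)
  have hqp := mul_nonneg hb.le (hf.convexOn.bregmanDiv_nonneg (hd q) p)
  unfold crossDefect at h
  constructor
  · by_contra hne
    linarith [hV.sub_mul_sub_pos hne]
  · by_contra hne
    linarith [mul_pos ha (hf.bregmanDiv_pos (hd p) hne)]

end CrossDefect

lemma hasDerivAt_of_contDiff_uncurry {H : ℝ → ℝ → ℝ} {n : WithTop ℕ∞}
    (hH : ContDiff ℝ n (Function.uncurry H)) (hn : n ≠ 0) (x p : ℝ) :
    HasDerivAt (H x) (fderiv ℝ (Function.uncurry H) (x, p) (0, 1)) p :=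
  (hH.differentiable hn (x, p)).hasFDerivAt.comp_hasDerivAt p
    ((hasDerivAt_const p x).prodMk (hasDerivAt_id p))

lemma contDiff_deriv_comp_of_contDiff_uncurry {H : ℝ → ℝ → ℝ} {g : ℝ → ℝ} {n : WithTop ℕ∞}
    (hH : ContDiff ℝ (n + 1) (Function.uncurry H)) (hg : ContDiff ℝ n g) :
    ContDiff ℝ n fun x => deriv (H x) (g x) := by
  simp_rw [fun x => (hasDerivAt_of_contDiff_uncurry hH (by simp) x (g x)).deriv]
  exact ((hH.fderiv_right le_rfl).comp (contDiff_id.prodMk hg)).clm_apply contDiff_const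

lemma constant_of_deriv_eq_zero_Icc {f : ℝ → ℝ} {a b : ℝ} (hf : Differentiable ℝ f)
    (h : ∀ x ∈ Icc a b, deriv f x = 0) : ∀ x ∈ Icc a b, f x = f a :=
  constant_of_has_deriv_right_zero hf.continuous.continuousOn fun x hx => by
    simpa [h x (Ico_subset_Icc_self hx)] using (hf x).hasDerivAt.hasDerivWithinAt

lemma eq_of_deriv_eq_of_integral_eq {f g : ℝ → ℝ} {a b : ℝ} (hab : a < b)
    (hf : Differentiable ℝ f) (hg : Differentiable ℝ g) (h : ∀ x ∈ Icc a b, deriv f x = deriv g x)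
    (hint : ∫ x in a..b, f x = ∫ x in a..b, g x) : ∀ x ∈ Icc a b, f x = g x := by
  have hconst : ∀ x ∈ Icc a b, f x - g x = f a - g a :=
    constant_of_deriv_eq_zero_Icc (hf.sub hg) fun x hx => by
      rw [deriv_fun_sub (hf x) (hg x), h x hx, sub_self]
  have hzero : (b - a) * (f a - g a) = 0 := by
    rw [← smul_eq_mul, ← integral_const,
      ← integral_congr fun x hx => hconst x (by rwa [uIcc_of_le hab.le] at hx),
      integral_sub (hf.continuous.intervalIntegrable _ _) (hg.continuous.intervalIntegrable _ _),
      hint, sub_self]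
  intro x hx
  rcases mul_eq_zero.1 hzero with hba | hfg <;> linarith [hconst x hx]

lemma eq_zero_of_integral_eq_zero_of_nonneg {f : ℝ → ℝ} {a b : ℝ} (hab : a < b)
    (hf : ContinuousOn f (Icc a b)) (h0 : ∀ x ∈ Icc a b, 0 ≤ f x) (hint : ∫ x in a..b, f x = 0) :
    ∀ x ∈ Icc a b, f x = 0 := by
  intro x hx
  by_contra hne
  have := integral_pos hab hf (fun y hy => h0 y (Ioc_subset_Icc_self hy))
    ⟨x, hx, (h0 x hx).lt_of_ne' hne⟩
  exact this.ne' hint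

noncomputable def mfgFlux (ν : ℝ) (H : ℝ → ℝ → ℝ) (u m : ℝ → ℝ) (y : ℝ) : ℝ :=
  ν * deriv m y + deriv (H y) (deriv u y) * m y

structure IsStationaryMFGSolution (L ν : ℝ) (H : ℝ → ℝ → ℝ) (V : ℝ → ℝ) (ρ : ℝ) (u m : ℝ → ℝ) :
    Prop where
  contDiff_u : ContDiff ℝ 2 u
  contDiff_m : ContDiff ℝ 2 m
  hjb : ∀ x ∈ Icc 0 L, -ν * deriv (deriv u) x + H x (deriv u x) + ρ = V (m x)
  fokkerPlanck : ∀ x ∈ Icc 0 L, deriv (mfgFlux ν H u m) x = 0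
  deriv_u_zero : deriv u 0 = 0
  deriv_u_L : deriv u L = 0
  mfgFlux_zero : mfgFlux ν H u m 0 = 0
  integral_m : ∫ x in 0..L, m x = 1

noncomputable def crossTerm (ν : ℝ) (u₁ u₂ m₁ m₂ : ℝ → ℝ) (y : ℝ) : ℝ :=
  -ν * ((deriv u₁ y - deriv u₂ y) * (m₁ y - m₂ y))

namespace IsStationaryMFGSolution

variable {L ν : ℝ} {H : ℝ → ℝ → ℝ} {V : ℝ → ℝ} {ρ ρ₁ ρ₂ : ℝ} {u m u₁ u₂ m₁ m₂ : ℝ → ℝ}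

lemma mfgFlux_eq_zero (hH : ContDiff ℝ 2 (Function.uncurry H))
    (s : IsStationaryMFGSolution L ν H V ρ u m) : ∀ x ∈ Icc 0 L, mfgFlux ν H u m x = 0 := by
  have hflux : ContDiff ℝ 1 (mfgFlux ν H u m) :=
    (contDiff_const.mul s.contDiff_m.deriv').add
      ((contDiff_deriv_comp_of_contDiff_uncurry hH s.contDiff_u.deriv').mul
        (s.contDiff_m.of_le (by norm_num)))
  intro x hx
  rw [constant_of_deriv_eq_zero_Icc (hflux.differentiable one_ne_zero) s.fokkerPlanck x hx,
    s.mfgFlux_zero]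

lemma contDiff_crossTerm (s₁ : IsStationaryMFGSolution L ν H V ρ₁ u₁ m₁)
    (s₂ : IsStationaryMFGSolution L ν H V ρ₂ u₂ m₂) : ContDiff ℝ 1 (crossTerm ν u₁ u₂ m₁ m₂) :=
  contDiff_const.mul ((s₁.contDiff_u.deriv'.sub s₂.contDiff_u.deriv').mul
    ((s₁.contDiff_m.sub s₂.contDiff_m).of_le (by norm_num)))

lemma crossDefect_eq_deriv_crossTerm_add (hH : ContDiff ℝ 2 (Function.uncurry H))
    (s₁ : IsStationaryMFGSolution L ν H V ρ₁ u₁ m₁) (s₂ : IsStationaryMFGSolution L ν H V ρ₂ u₂ m₂)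
    {x : ℝ} (hx : x ∈ Icc 0 L) :
    crossDefect V (H x) (m₁ x) (m₂ x) (deriv u₁ x) (deriv u₂ x) =
      deriv (crossTerm ν u₁ u₂ m₁ m₂) x + (ρ₁ - ρ₂) * (m₁ x - m₂ x) := by
  have hdu₁ := (s₁.contDiff_u.deriv'.differentiable one_ne_zero x).hasDerivAt
  have hdu₂ := (s₂.contDiff_u.deriv'.differentiable one_ne_zero x).hasDerivAt
  have hm₁ := (s₁.contDiff_m.differentiable (by norm_num) x).hasDerivAt
  have hm₂ := (s₂.contDiff_m.differentiable (by norm_num) x).hasDerivAt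
  have hG : HasDerivAt (crossTerm ν u₁ u₂ m₁ m₂)
      (-ν * ((deriv (deriv u₁) x - deriv (deriv u₂) x) * (m₁ x - m₂ x)
        + (deriv u₁ x - deriv u₂ x) * (deriv m₁ x - deriv m₂ x))) x :=
    ((hdu₁.sub hdu₂).mul (hm₁.sub hm₂)).const_mul (-ν)
  rw [hG.deriv]
  have hflux₁ := s₁.mfgFlux_eq_zero hH x hx
  have hflux₂ := s₂.mfgFlux_eq_zero hH x hx
  unfold mfgFlux at hflux₁ hflux₂
  unfold crossDefect bregmanDiv
  linear_combination (m₂ x - m₁ x) * s₁.hjb x hx + (m₁ x - m₂ x) * s₂.hjb x hx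
    + (deriv u₁ x - deriv u₂ x) * (hflux₁ - hflux₂)

lemma integral_crossDefect_eq_zero (hL : 0 ≤ L) (hH : ContDiff ℝ 2 (Function.uncurry H))
    (s₁ : IsStationaryMFGSolution L ν H V ρ₁ u₁ m₁)
    (s₂ : IsStationaryMFGSolution L ν H V ρ₂ u₂ m₂) :
    ∫ x in 0..L, crossDefect V (H x) (m₁ x) (m₂ x) (deriv u₁ x) (deriv u₂ x) = 0 := by
  have hG := contDiff_crossTerm s₁ s₂
  have hm₁ := s₁.contDiff_m.continuous
  have hm₂ := s₂.contDiff_m.continuous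
  rw [integral_congr fun x hx => crossDefect_eq_deriv_crossTerm_add hH s₁ s₂
      (by rwa [uIcc_of_le hL] at hx),
    integral_add ((hG.continuous_deriv le_rfl).intervalIntegrable _ _)
      ((by fun_prop : Continuous fun x => (ρ₁ - ρ₂) * (m₁ x - m₂ x)).intervalIntegrable _ _),
    integral_deriv_eq_sub (fun x _ => hG.differentiable one_ne_zero x)
      ((hG.continuous_deriv le_rfl).intervalIntegrable _ _),
    integral_const_mul, integral_sub (hm₁.intervalIntegrable _ _) (hm₂.intervalIntegrable _ _),
    s₁.integral_m, s₂.integral_m]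
  simp [crossTerm, s₁.deriv_u_zero, s₁.deriv_u_L, s₂.deriv_u_zero, s₂.deriv_u_L]

lemma continuousOn_crossDefect (hH : ContDiff ℝ 2 (Function.uncurry H))
    (s₁ : IsStationaryMFGSolution L ν H V ρ₁ u₁ m₁)
    (s₂ : IsStationaryMFGSolution L ν H V ρ₂ u₂ m₂) :
    ContinuousOn (fun x => crossDefect V (H x) (m₁ x) (m₂ x) (deriv u₁ x) (deriv u₂ x))
      (Icc 0 L) := by
  have hm₁ := s₁.contDiff_m.continuous
  have hm₂ := s₂.contDiff_m.continuous
  have hcont : Continuous fun x => deriv (crossTerm ν u₁ u₂ m₁ m₂) x + (ρ₁ - ρ₂) * (m₁ x - m₂ x) :=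
    ((contDiff_crossTerm s₁ s₂).continuous_deriv le_rfl).add (by fun_prop)
  exact hcont.continuousOn.congr fun _ hx => crossDefect_eq_deriv_crossTerm_add hH s₁ s₂ hx

lemma ergodicConst_eq (hL : 0 < L) (s₁ : IsStationaryMFGSolution L ν H V ρ₁ u₁ m₁)
    (s₂ : IsStationaryMFGSolution L ν H V ρ₂ u₂ m₂) (hm : ∀ x ∈ Icc 0 L, m₁ x = m₂ x)
    (hu : ∀ x ∈ Icc 0 L, deriv u₁ x = deriv u₂ x) : ρ₁ = ρ₂ := by
  have hmid : L / 2 ∈ Icc 0 L := ⟨by linarith, by linarith⟩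
  have hu' : deriv (deriv u₁) (L / 2) = deriv (deriv u₂) (L / 2) :=
    Filter.eventuallyEq_of_mem (Icc_mem_nhds (by linarith) (by linarith)) hu |>.deriv_eq
  have hjb₂ := s₂.hjb _ hmid
  rw [← hu _ hmid, ← hm _ hmid, ← hu'] at hjb₂
  linarith [s₁.hjb _ hmid]

end IsStationaryMFGSolution

theorem stmt_12_general (L ν ρ1 ρ2 : ℝ) (hL : 0 < L)
    (H : ℝ → ℝ → ℝ) (hH : ContDiff ℝ 2 fun p : ℝ × ℝ => H p.1 p.2)
    (hHconv : ∀ x : ℝ, StrictConvexOn ℝ Set.univ (H x))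
    (V : ℝ → ℝ) (hVmono : StrictMono V)
    (u1 u2 m1 m2 : ℝ → ℝ)
    (hu1 : ContDiff ℝ 2 u1) (hu2 : ContDiff ℝ 2 u2)
    (hm1 : ContDiff ℝ 2 m1) (hm2 : ContDiff ℝ 2 m2)
    (hm1pos : ∀ x ∈ Icc (0:ℝ) L, 0 < m1 x)
    (hm2pos : ∀ x ∈ Icc (0:ℝ) L, 0 < m2 x)
    (hHJB1 : ∀ x ∈ Icc (0:ℝ) L,
      -ν * deriv (deriv u1) x + H x (deriv u1 x) + ρ1 = V (m1 x))
    (hHJB2 : ∀ x ∈ Icc (0:ℝ) L,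
      -ν * deriv (deriv u2) x + H x (deriv u2 x) + ρ2 = V (m2 x))
    (hFP1 : ∀ x ∈ Icc (0:ℝ) L,
      deriv (fun y => ν * deriv m1 y + deriv (H y) (deriv u1 y) * m1 y) x = 0)
    (hFP2 : ∀ x ∈ Icc (0:ℝ) L,
      deriv (fun y => ν * deriv m2 y + deriv (H y) (deriv u2 y) * m2 y) x = 0)
    (hNu1 : deriv u1 0 = 0 ∧ deriv u1 L = 0)
    (hNu2 : deriv u2 0 = 0 ∧ deriv u2 L = 0)
    (hflux1 : ∀ v ∈ ({0, L} : Set ℝ),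
      ν * deriv m1 v + deriv (H v) (deriv u1 v) * m1 v = 0)
    (hflux2 : ∀ v ∈ ({0, L} : Set ℝ),
      ν * deriv m2 v + deriv (H v) (deriv u2 v) * m2 v = 0)
    (hm1int : ∫ x in (0:ℝ)..L, m1 x = 1) (hm2int : ∫ x in (0:ℝ)..L, m2 x = 1)
    (hu1int : ∫ x in (0:ℝ)..L, u1 x = 0) (hu2int : ∫ x in (0:ℝ)..L, u2 x = 0) :
    (∀ x ∈ Icc (0:ℝ) L, m1 x = m2 x ∧ u1 x = u2 x) ∧ ρ1 = ρ2 := by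
  have s₁ : IsStationaryMFGSolution L ν H V ρ1 u1 m1 :=
    ⟨hu1, hm1, hHJB1, hFP1, hNu1.1, hNu1.2, hflux1 0 (by simp), hm1int⟩
  have s₂ : IsStationaryMFGSolution L ν H V ρ2 u2 m2 :=
    ⟨hu2, hm2, hHJB2, hFP2, hNu2.1, hNu2.2, hflux2 0 (by simp), hm2int⟩
  have hHd : ∀ x, Differentiable ℝ (H x) := fun x p =>
    (hasDerivAt_of_contDiff_uncurry hH two_ne_zero x p).differentiableAt
  have hdefect := eq_zero_of_integral_eq_zero_of_nonneg hL (s₁.continuousOn_crossDefect hH s₂)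
    (fun x hx => crossDefect_nonneg hVmono.monotone (hHconv x).convexOn (hHd x)
      (hm1pos x hx).le (hm2pos x hx).le)
    (s₁.integral_crossDefect_eq_zero hL.le hH s₂)
  have hsame := fun x hx => eq_and_eq_of_crossDefect_eq_zero hVmono (hHconv x) (hHd x)
    (hm1pos x hx) (hm2pos x hx) (hdefect x hx)
  have hu := eq_of_deriv_eq_of_integral_eq hL (hu1.differentiable two_ne_zero)
    (hu2.differentiable two_ne_zero) (fun x hx => (hsame x hx).2) (hu1int.trans hu2int.symm)
  exact ⟨fun x hx => ⟨(hsame x hx).1, hu x hx⟩,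
    s₁.ergodicConst_eq hL s₂ (fun x hx => (hsame x hx).1) (fun x hx => (hsame x hx).2)⟩

/-- Uniqueness for the stationary MFG system on `[0,L]` under a strictly monotone
coupling `V` and strictly convex Hamiltonian: two solutions coincide on `[0,L]`
and have the same ergodic constant. -/
theorem stmt_12 (L ν ρ1 ρ2 : ℝ) (hL : 0 < L) (hν : 0 < ν)
    (H : ℝ → ℝ → ℝ) (hH : ContDiff ℝ 2 fun p : ℝ × ℝ => H p.1 p.2)
    (hHconv : ∀ x : ℝ, StrictConvexOn ℝ Set.univ (H x))
    (V : ℝ → ℝ) (hV : ContDiff ℝ 1 V) (hVmono : StrictMono V)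
    (u1 u2 m1 m2 : ℝ → ℝ)
    (hu1 : ContDiff ℝ 2 u1) (hu2 : ContDiff ℝ 2 u2)
    (hm1 : ContDiff ℝ 2 m1) (hm2 : ContDiff ℝ 2 m2)
    (hm1pos : ∀ x ∈ Icc (0:ℝ) L, 0 < m1 x)
    (hm2pos : ∀ x ∈ Icc (0:ℝ) L, 0 < m2 x)
    (hHJB1 : ∀ x ∈ Icc (0:ℝ) L,
      -ν * deriv (deriv u1) x + H x (deriv u1 x) + ρ1 = V (m1 x))
    (hHJB2 : ∀ x ∈ Icc (0:ℝ) L,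
      -ν * deriv (deriv u2) x + H x (deriv u2 x) + ρ2 = V (m2 x))
    (hFP1 : ∀ x ∈ Icc (0:ℝ) L,
      deriv (fun y => ν * deriv m1 y + deriv (H y) (deriv u1 y) * m1 y) x = 0)
    (hFP2 : ∀ x ∈ Icc (0:ℝ) L,
      deriv (fun y => ν * deriv m2 y + deriv (H y) (deriv u2 y) * m2 y) x = 0)
    (hNu1 : deriv u1 0 = 0 ∧ deriv u1 L = 0)
    (hNu2 : deriv u2 0 = 0 ∧ deriv u2 L = 0)
    (hflux1 : ∀ v ∈ ({0, L} : Set ℝ),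
      ν * deriv m1 v + deriv (H v) (deriv u1 v) * m1 v = 0)
    (hflux2 : ∀ v ∈ ({0, L} : Set ℝ),
      ν * deriv m2 v + deriv (H v) (deriv u2 v) * m2 v = 0)
    (hm1int : ∫ x in (0:ℝ)..L, m1 x = 1) (hm2int : ∫ x in (0:ℝ)..L, m2 x = 1)
    (hu1int : ∫ x in (0:ℝ)..L, u1 x = 0) (hu2int : ∫ x in (0:ℝ)..L, u2 x = 0) :
    (∀ x ∈ Icc (0:ℝ) L, m1 x = m2 x ∧ u1 x = u2 x) ∧ ρ1 = ρ2 :=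
  stmt_12_general L ν ρ1 ρ2 hL H hH hHconv V hVmono u1 u2 m1 m2 hu1 hu2 hm1 hm2 hm1pos hm2pos hHJB1
    hHJB2 hFP1 hFP2 hNu1 hNu2 hflux1 hflux2 hm1int hm2int hu1int hu2int
end
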